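/- arXiv:0810.0443 — 2 statements merged into one kernel-verified Lean document; each statement's English description precedes it below -/
import Mathlib

section
/- Let Φ = (Φ₁,…,Φₙ) be an n-tuple of polynomials in ℤ[x₁,…,xₙ] and let p be a prime large enough that the conclusion of the generator-reduction theorem holds (the reductions mod p of generators of I(V(ℤ)) generate I(V(𝔽_p))). Let q = p^k, let ℤ_q be the ring of integers of the unramified extension of ℚ_p with residue field 𝔽_q, and let π_p : ℤ_q[x₁,…,xₙ] → 𝔽_q[x₁,…,xₙ] be reduction modulo p. Let I(V(ℤ_q)) and I(V(𝔽_q)) be the kernels of (Φ*)ⁿ over ℤ_q and 𝔽_q respectively. Then I(V(𝔽_q)) = π_p(I(V(ℤ_q))). -/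
open MvPolynomial

noncomputable section

/-- The substitution endomorphism `Φ* : f ↦ f ∘ Φ` of the polynomial ring `R[x₁,…,xₙ]`
induced by an `n`-tuple `Φ` of polynomials. -/
def substEnd (R : Type*) [CommRing R] {n : ℕ} (Φ : Fin n → MvPolynomial (Fin n) R) :
    MvPolynomial (Fin n) R →ₐ[R] MvPolynomial (Fin n) R :=
  MvPolynomial.aeval Φ

/-- The ideal `I(V(R))`: the kernel of the `n`-th power `(Φ*)ⁿ` of the substitution
endomorphism, i.e. the set of `f` with `f(Φⁿ) = 0`. -/
def iterKer (R : Type*) [CommRing R] {n : ℕ} (Φ : Fin n → MvPolynomial (Fin n) R) :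
    Ideal (MvPolynomial (Fin n) R) :=
  RingHom.ker (substEnd R Φ ^ n)

/-- `ℤ_q`: the ring of integers of the unramified extension of `ℚ_p` with residue field
`𝔽_q`, `q = p^k`, realized as the ring of Witt vectors of `𝔽_q`. -/
abbrev Zq (p k : ℕ) [Fact p.Prime] : Type _ := WittVector p (GaloisField p k)

/-! Reduction of coefficients commutes with `Φ*`, which gives `⊇`. For `⊆`, choose a basis `b`
of `𝔽_q` over `𝔽_p`: every `f ∈ 𝔽_q[x]` is uniquely `∑ⱼ bⱼ gⱼ` with `gⱼ ∈ 𝔽_p[x]`, and since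
`(Φ*)ⁿ` is `𝔽_q`-linear and defined over `𝔽_p`, `f` lies in `I(V(𝔽_q))` only if every `gⱼ` lies
in `I(V(𝔽_p))`. That ideal is the reduction of `I(V(ℤ))` by hypothesis, and `I(V(ℤ))` maps into
`I(V(ℤ_q))`; the two routes `ℤ → 𝔽_p → 𝔽_q` and `ℤ → ℤ_q → 𝔽_q` agree because ring maps out of
`ℤ` are unique. -/

section BaseChange

variable {R S : Type*} [CommRing R] [CommRing S] {n : ℕ}

theorem map_substEnd (h : R →+* S) (Φ : Fin n → MvPolynomial (Fin n) R)
    (f : MvPolynomial (Fin n) R) :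
    map h (substEnd R Φ f) = substEnd S (fun i => map h (Φ i)) (map h f) :=
  map_bind₁ h Φ f

theorem map_substEnd_pow (h : R →+* S) (Φ : Fin n → MvPolynomial (Fin n) R) (m : ℕ)
    (f : MvPolynomial (Fin n) R) :
    map h ((substEnd R Φ ^ m) f) = (substEnd S (fun i => map h (Φ i)) ^ m) (map h f) := by
  induction m generalizing f with
  | zero => rfl
  | succ m ih => rw [pow_succ, pow_succ, AlgHom.mul_apply, AlgHom.mul_apply, ih, map_substEnd]

theorem map_iterKer_le (h : R →+* S) (Φ : Fin n → MvPolynomial (Fin n) R) :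
    Ideal.map (map h) (iterKer R Φ) ≤ iterKer S (fun i => map h (Φ i)) :=
  Ideal.map_le_iff_le_comap.mpr fun f hf => by
    rw [Ideal.mem_comap, iterKer, RingHom.mem_ker, ← map_substEnd_pow, RingHom.mem_ker.mp hf,
      map_zero]

end BaseChange

section Basis

variable {σ τ η R A : Type*} [CommRing R] [CommRing A] [Algebra R A]

theorem exists_eq_sum_C_basis_mul_map (b : Module.Basis η R A) (f : MvPolynomial σ A) :
    ∃ g : η →₀ MvPolynomial σ R, f = g.sum fun j gj => C (b j) * map (algebraMap R A) gj := by
  induction f using MvPolynomial.induction_on' with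
  | monomial m a =>
    refine ⟨(b.repr a).mapRange (monomial m) (map_zero _), ?_⟩
    rw [Finsupp.sum_mapRange_index (by simp)]
    conv_lhs => rw [← b.linearCombination_repr a, Finsupp.linearCombination_apply,
      map_finsuppSum (monomial m : A →ₗ[A] MvPolynomial σ A)]
    refine Finsupp.sum_congr fun j _ => ?_
    rw [map_monomial, C_mul_monomial, Algebra.smul_def, mul_comm]
  | add f₁ f₂ ih₁ ih₂ =>
    obtain ⟨g₁, rfl⟩ := ih₁
    obtain ⟨g₂, rfl⟩ := ih₂
    exact ⟨g₁ + g₂, (Finsupp.sum_add_index' (by simp) fun _ _ _ => by rw [map_add, mul_add]).symm⟩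

theorem eq_zero_of_sum_C_basis_mul_map_eq_zero (b : Module.Basis η R A)
    {g : η →₀ MvPolynomial σ R}
    (hg : (g.sum fun j gj => C (b j) * map (algebraMap R A) gj) = 0) : g = 0 := by
  ext j m
  have hm : Finsupp.linearCombination R b (g.mapRange (coeff m) (coeff_zero m)) = 0 := by
    rw [Finsupp.linearCombination_apply, Finsupp.sum_mapRange_index (by simp)]
    simpa [Finsupp.sum, coeff_sum, coeff_C_mul, coeff_map, Algebra.smul_def, mul_comm] using
      congrArg (coeff m) hg
  simpa using DFunLike.congr_fun (linearIndependent_iff.mp b.linearIndependent _ hm) j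

theorem ker_le_map_ker_of_basis (b : Module.Basis η R A)
    (ψ : MvPolynomial σ R →ₐ[R] MvPolynomial τ R)
    (ψA : MvPolynomial σ A →ₐ[A] MvPolynomial τ A)
    (hψ : ∀ f, ψA (map (algebraMap R A) f) = map (algebraMap R A) (ψ f)) :
    RingHom.ker ψA ≤ Ideal.map (map (algebraMap R A)) (RingHom.ker ψ) := by
  intro f hf
  obtain ⟨g, rfl⟩ := exists_eq_sum_C_basis_mul_map b f
  have hψg : g.mapRange ψ (map_zero ψ) = 0 := by
    apply eq_zero_of_sum_C_basis_mul_map_eq_zero b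
    rw [Finsupp.sum_mapRange_index (by simp)]
    rw [RingHom.mem_ker, map_finsuppSum] at hf
    simpa only [map_mul, ← algebraMap_eq, AlgHom.commutes, hψ] using hf
  refine Ideal.sum_mem _ fun j _ => Ideal.mul_mem_left _ _ (Ideal.mem_map_of_mem _ ?_)
  simpa using DFunLike.congr_fun hψg j

theorem iterKer_map_le_map_iterKer (b : Module.Basis η R A) {n : ℕ}
    (Φ : Fin n → MvPolynomial (Fin n) R) :
    iterKer A (fun i => map (algebraMap R A) (Φ i)) ≤
      Ideal.map (map (algebraMap R A)) (iterKer R Φ) :=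
  ker_le_map_ker_of_basis b _ _ fun f => (map_substEnd_pow _ Φ n f).symm

end Basis

theorem iterKer_Fq_eq_reduction_iterKer_Zq_general (n : ℕ) (Φ : Fin n → MvPolynomial (Fin n) ℤ)
    (p : ℕ) [Fact p.Prime]
    (hp : Ideal.map (MvPolynomial.map (Int.castRingHom (ZMod p))) (iterKer ℤ Φ) =
      iterKer (ZMod p) (fun i => MvPolynomial.map (Int.castRingHom (ZMod p)) (Φ i)))
    (k : ℕ)
    (π : Zq p k →+* GaloisField p k) :
    iterKer (GaloisField p k)
        (fun i => MvPolynomial.map (Int.castRingHom (GaloisField p k)) (Φ i)) =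
      Ideal.map (MvPolynomial.map π)
        (iterKer (Zq p k) (fun i => MvPolynomial.map (Int.castRingHom (Zq p k)) (Φ i))) := by
  have hπ : π.comp (Int.castRingHom (Zq p k)) = Int.castRingHom (GaloisField p k) :=
    RingHom.ext_int _ _
  have hFq : (algebraMap (ZMod p) (GaloisField p k)).comp (Int.castRingHom (ZMod p)) =
      Int.castRingHom (GaloisField p k) := RingHom.ext_int _ _
  refine le_antisymm ?_ ?_
  · calc _ = iterKer (GaloisField p k) (fun i => map (algebraMap (ZMod p) (GaloisField p k))
              (map (Int.castRingHom (ZMod p)) (Φ i))) := by simp only [map_map, hFq]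
      _ ≤ _ := iterKer_map_le_map_iterKer (Module.Basis.ofVectorSpace _ _) _
      _ = Ideal.map (map π) (Ideal.map (map (Int.castRingHom (Zq p k))) (iterKer ℤ Φ)) := by
        rw [← hp, Ideal.map_map, Ideal.map_map]
        congr 1
        ext <;> simp
      _ ≤ _ := Ideal.map_mono (map_iterKer_le _ Φ)
  · simpa only [map_map, hπ] using
      map_iterKer_le π fun i => map (Int.castRingHom (Zq p k)) (Φ i)

/-- Let `Φ` be an `n`-tuple of integer polynomials and let `p` be a prime large enough that
the reduction mod `p` of `I(V(ℤ))` generates `I(V(𝔽_p))`. Let `q = p^k`, let `ℤ_q` be the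
ring of integers of the unramified extension of `ℚ_p` with residue field `𝔽_q`, and let
`π_p : ℤ_q[x₁,…,xₙ] → 𝔽_q[x₁,…,xₙ]` be reduction mod `p` (induced by the residue map, i.e.
the surjection `ℤ_q → 𝔽_q` with kernel `(p)`). Then `I(V(𝔽_q)) = π_p(I(V(ℤ_q)))`. -/
theorem iterKer_Fq_eq_reduction_iterKer_Zq (n : ℕ) (Φ : Fin n → MvPolynomial (Fin n) ℤ)
    (p : ℕ) [Fact p.Prime]
    (hp : Ideal.map (MvPolynomial.map (Int.castRingHom (ZMod p))) (iterKer ℤ Φ) =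
      iterKer (ZMod p) (fun i => MvPolynomial.map (Int.castRingHom (ZMod p)) (Φ i)))
    (k : ℕ) (hk : 1 ≤ k)
    (π : Zq p k →+* GaloisField p k) (hπ : Function.Surjective π)
    (hker : RingHom.ker π = Ideal.span {(p : Zq p k)}) :
    iterKer (GaloisField p k)
        (fun i => MvPolynomial.map (Int.castRingHom (GaloisField p k)) (Φ i)) =
      Ideal.map (MvPolynomial.map π)
        (iterKer (Zq p k) (fun i => MvPolynomial.map (Int.castRingHom (Zq p k)) (Φ i))) :=
  iterKer_Fq_eq_reduction_iterKer_Zq_general n Φ p hp k π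
end
end

section
/- Under the same hypotheses (Φ an integer polynomial self-map of affine n-space, p sufficiently large, X ∈ V(ℤ_q) with x = X mod p, M such that Φ^M(X) ≡ X (mod p) and the tangent map of φ^M at x restricted to the tangent space of V(𝔽_q) at x is the identity, so that Φ^{pM}(X) ≡ X (mod p²)): let α⁽²⁾ ∈ 𝔽_qⁿ be the reduction mod p of (Φ^{pM}(X) − X)/p². Then for every X' ∈ V(ℤ_q) with X' ≡ X (mod p²), one has Φ^{pM}(X') ≡ X' + α⁽²⁾·p² (mod p³). Consequently Φ^{p²M}(X') ≡ X' (mod p³). -/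
open MvPolynomial

noncomputable section

/-- The polynomial self-map of `Rⁿ` defined by an `n`-tuple of polynomials. -/
def polySelfMap {R : Type*} [CommRing R] {n : ℕ} (Φ : Fin n → MvPolynomial (Fin n) R) :
    (Fin n → R) → (Fin n → R) :=
  fun v i => eval v (Φ i)

namespace ProofAux
variable {n : ℕ} {R S : Type*} [CommRing R] [CommRing S]

/-- First-order Taylor expansion with error divisible by `c²`. -/
lemma taylor2 (G : MvPolynomial (Fin n) R) (a h : Fin n → R) (c : R)
    (hc : ∀ i, c ∣ h i) :
    c ^ 2 ∣ (eval (fun i => a i + h i) G - eval a G - ∑ j, eval a (pderiv j G) * h j) := by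
  induction G using MvPolynomial.induction_on with
  | C r => simp
  | add f g hf hg =>
      have := dvd_add hf hg
      convert this using 1
      simp only [map_add, add_mul, Finset.sum_add_distrib]
      ring
  | mul_X f i hf =>
      classical
      obtain ⟨r, hr⟩ := hf
      have hS : c ∣ ∑ j, eval a (pderiv j f) * h j :=
        Finset.dvd_sum fun j _ => Dvd.dvd.mul_left (hc j) _
      obtain ⟨s, hs⟩ := hS
      obtain ⟨t, ht⟩ := hc i
      have hterm : ∀ j, eval a (pderiv j (f * X i))
          = eval a (pderiv j f) * a i + (if i = j then eval a f else 0) := by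
        intro j
        rcases eq_or_ne i j with rfl | hij
        · simp [pderiv_mul]; ring
        · rw [pderiv_mul, pderiv_X_of_ne hij, if_neg hij]; simp [mul_comm]
      have hsum : ∑ j, eval a (pderiv j (f * X i)) * h j
          = (∑ j, eval a (pderiv j f) * h j) * a i + eval a f * h i := by
        simp only [hterm, add_mul, ite_mul, zero_mul]
        rw [Finset.sum_add_distrib, Finset.sum_ite_eq, Finset.sum_mul]
        simp [mul_comm, mul_left_comm, mul_assoc]
      refine ⟨s * t + r * (a i + h i), ?_⟩
      rw [hsum]
      simp only [eval_mul, eval_X]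
      linear_combination (a i + h i) * hr + h i * hs + c * s * ht

/-- Evaluation of a substituted polynomial. -/
lemma eval_aeval' (Ψ : Fin n → MvPolynomial (Fin n) R) (v : Fin n → R)
    (g : MvPolynomial (Fin n) R) :
    eval v (aeval Ψ g) = eval (fun l => eval v (Ψ l)) g := by
  induction g using MvPolynomial.induction_on with
  | C r => simp
  | add f g hf hg => rw [map_add, map_add, hf, hg, map_add]
  | mul_X f i hf => rw [map_mul, map_mul, hf, aeval_X]; simp

/-- Chain rule for partial derivatives of a substituted polynomial. -/
lemma pderiv_aeval' (Ψ : Fin n → MvPolynomial (Fin n) R)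
    (g : MvPolynomial (Fin n) R) (j : Fin n) :
    pderiv j (aeval Ψ g) = ∑ l, aeval Ψ (pderiv l g) * pderiv j (Ψ l) := by
  classical
  induction g using MvPolynomial.induction_on with
  | C r => simp
  | add f g hf hg =>
      rw [map_add, map_add, hf, hg, ← Finset.sum_add_distrib]
      exact Finset.sum_congr rfl fun l _ => by simp only [map_add]; ring
  | mul_X f i hf =>
      have hterm : ∀ l, pderiv l (f * X i) = pderiv l f * X i + (if i = l then f else 0) := by
        intro l
        rcases eq_or_ne i l with rfl | hil
        · simp [pderiv_mul]; ring
        · rw [pderiv_mul, pderiv_X_of_ne hil, if_neg hil]; simp [mul_comm]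
      rw [map_mul, aeval_X, pderiv_mul, hf]
      simp only [hterm, map_add, map_mul, aeval_X, apply_ite (aeval Ψ), map_zero,
        add_mul, ite_mul, zero_mul, Finset.sum_add_distrib, Finset.sum_ite_eq,
        Finset.mem_univ, if_true]
      rw [Finset.sum_mul]
      congr 1
      exact Finset.sum_congr rfl fun l _ => by ring

/-- Map commutes with substitution. -/
lemma map_aeval' (π : R →+* S) (Ψ : Fin n → MvPolynomial (Fin n) R)
    (g : MvPolynomial (Fin n) R) :
    MvPolynomial.map π (aeval Ψ g) = aeval (fun l => MvPolynomial.map π (Ψ l))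
      (MvPolynomial.map π g) := by
  induction g using MvPolynomial.induction_on with
  | C r => simp
  | add f g hf hg => rw [map_add, map_add, hf, hg, map_add, map_add]
  | mul_X f i hf => simp only [map_mul, hf, aeval_X, map_X]

/-- Ring hom commutes with evaluation. -/
lemma map_eval' (π : R →+* S) (v : Fin n → R) (g : MvPolynomial (Fin n) R) :
    π (eval v g) = eval (fun i => π (v i)) (MvPolynomial.map π g) := by
  induction g using MvPolynomial.induction_on with
  | C r => simp
  | add f g hf hg => simp [hf, hg]
  | mul_X f i hf => simp [hf]

variable {n : ℕ} {R S : Type*} [CommRing R] [CommRing S]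

lemma substEnd_pow_succ' (Φ : Fin n → MvPolynomial (Fin n) R) (m : ℕ)
    (g : MvPolynomial (Fin n) R) :
    (substEnd R Φ ^ (m + 1)) g = (substEnd R Φ ^ m) (substEnd R Φ g) := by
  rw [pow_succ, AlgHom.mul_apply]

lemma eval_substEnd_pow (Φ : Fin n → MvPolynomial (Fin n) R) (m : ℕ) (v : Fin n → R)
    (g : MvPolynomial (Fin n) R) :
    eval v ((substEnd R Φ ^ m) g) = eval ((polySelfMap Φ)^[m] v) g := by
  induction m generalizing g with
  | zero => simp only [pow_zero, AlgHom.one_apply, Function.iterate_zero_apply]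
  | succ m ih =>
      rw [substEnd_pow_succ', ih, Function.iterate_succ_apply']
      exact eval_aeval' Φ _ g

lemma iter_coord (Φ : Fin n → MvPolynomial (Fin n) R) (m : ℕ) (v : Fin n → R) (i : Fin n) :
    (polySelfMap Φ)^[m] v i = eval v ((substEnd R Φ ^ m) (X i)) := by
  rw [eval_substEnd_pow, eval_X]

lemma substEnd_pow_mem (Φ : Fin n → MvPolynomial (Fin n) R) {G : MvPolynomial (Fin n) R}
    (hG : G ∈ iterKer R Φ) (m : ℕ) : (substEnd R Φ ^ m) G ∈ iterKer R Φ := by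
  have hG0 : (substEnd R Φ ^ n) G = 0 := RingHom.mem_ker.mp hG
  refine RingHom.mem_ker.mpr ?_
  have h1 : (substEnd R Φ ^ n) ((substEnd R Φ ^ m) G)
      = (substEnd R Φ ^ m) ((substEnd R Φ ^ n) G) := by
    rw [← AlgHom.mul_apply, ← AlgHom.mul_apply, pow_mul_comm]
  rw [h1, hG0, map_zero]

lemma map_substEnd_pow (π : R →+* S) (ΦR : Fin n → MvPolynomial (Fin n) R)
    (ΦS : Fin n → MvPolynomial (Fin n) S)
    (h0 : ∀ i, MvPolynomial.map π (ΦR i) = ΦS i) (m : ℕ) (g : MvPolynomial (Fin n) R) :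
    MvPolynomial.map π ((substEnd R ΦR ^ m) g)
      = (substEnd S ΦS ^ m) (MvPolynomial.map π g) := by
  induction m generalizing g with
  | zero => simp only [pow_zero, AlgHom.one_apply]
  | succ m ih =>
      rw [substEnd_pow_succ', ih, substEnd_pow_succ']
      congr 1
      show MvPolynomial.map π (aeval ΦR g) = aeval ΦS (MvPolynomial.map π g)
      rw [map_aeval' π ΦR g]
      have : (fun l => MvPolynomial.map π (ΦR l)) = ΦS := _root_.funext h0
      rw [this]

end ProofAux

/-- Let `Φ` be an integer polynomial self-map of affine `n`-space, `p` a sufficiently large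
prime (so that `I(V(𝔽_q)) = π_p(I(V(ℤ_q)))`), `X ∈ V(ℤ_q)` with reduction `x = π∘X`, and `M`
a positive integer such that `Φ^M(X) ≡ X (mod p)` and the tangent map of the reduction of
`Φ^M` mod `p` restricted to the Zariski tangent space of `V(𝔽_q)` at `x` is the identity (so
that `Φ^{pM}(X) ≡ X (mod p²)`).  If `α⁽²⁾` is the reduction mod `p` of `(Φ^{pM}(X) − X)/p²`
(with lift `D₂`), then for every `X' ∈ V(ℤ_q)` with `X' ≡ X (mod p²)` one has
`Φ^{pM}(X') ≡ X' + α⁽²⁾·p² (mod p³)`, and consequently `Φ^{p²M}(X') ≡ X' (mod p³)`. -/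
theorem iterate_pM_congr_mod_p_cubed (n : ℕ) (Φ : Fin n → MvPolynomial (Fin n) ℤ)
    (p : ℕ) [Fact p.Prime] (k : ℕ) (hk : 1 ≤ k)
    (π : Zq p k →+* GaloisField p k) (hπ : Function.Surjective π)
    (hker : RingHom.ker π = Ideal.span {(p : Zq p k)})
    -- `p` is sufficiently large: `I(V(𝔽_q)) = π_p (I(V(ℤ_q)))`
    (hp : iterKer (GaloisField p k)
        (fun i => MvPolynomial.map (Int.castRingHom (GaloisField p k)) (Φ i)) =
      Ideal.map (MvPolynomial.map π)
        (iterKer (Zq p k) (fun i => MvPolynomial.map (Int.castRingHom (Zq p k)) (Φ i))))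
    -- the point `X ∈ V(ℤ_q)` and its reduction `x`
    (X : Fin n → Zq p k)
    (hX : ∀ G ∈ iterKer (Zq p k)
      (fun i => MvPolynomial.map (Int.castRingHom (Zq p k)) (Φ i)), eval X G = 0)
    (M : ℕ) (hM : 0 < M)
    -- `Φ^M(X) ≡ X (mod p)`
    (hfix : ∀ i, π ((polySelfMap
      (fun i => MvPolynomial.map (Int.castRingHom (Zq p k)) (Φ i)))^[M] X i) = π (X i))
    -- the tangent map of the reduction of `Φ^M`, restricted to the Zariski tangent space of
    -- `V(𝔽_q)` at `x = π ∘ X`, is the identity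
    (htan : ∀ y : Fin n → GaloisField p k,
      (∀ g ∈ iterKer (GaloisField p k)
          (fun i => MvPolynomial.map (Int.castRingHom (GaloisField p k)) (Φ i)),
        ∑ j : Fin n, eval (fun i => π (X i)) (pderiv j g) * y j = 0) →
      ∀ i : Fin n,
        ∑ j : Fin n, eval (fun i => π (X i))
          (pderiv j ((substEnd (GaloisField p k)
            (fun i => MvPolynomial.map (Int.castRingHom (GaloisField p k)) (Φ i)) ^ M)
              (MvPolynomial.X i))) * y j = y i) :
    -- `D₂` is the divided difference `(Φ^{pM}(X) − X)/p²`, whose reduction is `α⁽²⁾`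
    ∀ D₂ : Fin n → Zq p k,
      (∀ i, (polySelfMap
          (fun i => MvPolynomial.map (Int.castRingHom (Zq p k)) (Φ i)))^[p * M] X i - X i =
        (p : Zq p k) ^ 2 * D₂ i) →
    ∀ X' : Fin n → Zq p k,
      (∀ G ∈ iterKer (Zq p k)
        (fun i => MvPolynomial.map (Int.castRingHom (Zq p k)) (Φ i)), eval X' G = 0) →
      (∀ i, ((p : Zq p k) ^ 2) ∣ (X' i - X i)) →
      (∀ i, ((p : Zq p k) ^ 3) ∣
        ((polySelfMap
          (fun i => MvPolynomial.map (Int.castRingHom (Zq p k)) (Φ i)))^[p * M] X' i -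
          (X' i + (p : Zq p k) ^ 2 * D₂ i))) ∧
      (∀ i, ((p : Zq p k) ^ 3) ∣
        ((polySelfMap
          (fun i => MvPolynomial.map (Int.castRingHom (Zq p k)) (Φ i)))^[p ^ 2 * M] X' i -
          X' i)) := by
  classical
  intro D₂ hD₂ X' hX'V hX'X
  set ΦR : Fin n → MvPolynomial (Fin n) (Zq p k) :=
    fun i => MvPolynomial.map (Int.castRingHom (Zq p k)) (Φ i) with hΦR
  set ΦF : Fin n → MvPolynomial (Fin n) (GaloisField p k) :=
    fun i => MvPolynomial.map (Int.castRingHom (GaloisField p k)) (Φ i) with hΦF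
  set x : Fin n → GaloisField p k := fun i => π (X i) with hx
  have hpne : (p : Zq p k) ≠ 0 := WittVector.p_nonzero p _
  have hdvd_pi : ∀ a : Zq p k, π a = 0 ↔ (p : Zq p k) ∣ a := fun a => by
    rw [← RingHom.mem_ker, hker, Ideal.mem_span_singleton]
  have hcancel : ∀ (m l : ℕ) (a : Zq p k),
      (p : Zq p k) ^ (m + l) ∣ (p : Zq p k) ^ m * a → (p : Zq p k) ^ l ∣ a := by
    intro m l a h
    obtain ⟨c, hc⟩ := h
    refine ⟨c, mul_left_cancel₀ (pow_ne_zero m hpne) ?_⟩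
    rw [hc, pow_add, mul_assoc]
  have h0 : ∀ i, MvPolynomial.map π (ΦR i) = ΦF i := by
    intro i
    rw [hΦR, hΦF]
    show MvPolynomial.map π (MvPolynomial.map (Int.castRingHom (Zq p k)) (Φ i)) = _
    have hcomp : π.comp (Int.castRingHom (Zq p k)) = Int.castRingHom (GaloisField p k) :=
      Subsingleton.elim _ _
    rw [MvPolynomial.map_map, hcomp]
  have hmapcomm : ∀ (m : ℕ) (g : MvPolynomial (Fin n) (Zq p k)),
      MvPolynomial.map π ((substEnd (Zq p k) ΦR ^ m) g)
        = (substEnd (GaloisField p k) ΦF ^ m) (MvPolynomial.map π g) :=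
    fun m g => ProofAux.map_substEnd_pow π ΦR ΦF h0 m g
  have hcoordred : ∀ (m : ℕ) (i : Fin n),
      π ((polySelfMap ΦR)^[m] X i)
        = eval x ((substEnd (GaloisField p k) ΦF ^ m) (MvPolynomial.X i)) := by
    intro m i
    rw [ProofAux.iter_coord, ProofAux.map_eval' π, hmapcomm, map_X]
  have hfixF : ∀ i,
      eval x ((substEnd (GaloisField p k) ΦF ^ M) (MvPolynomial.X i)) = x i := by
    intro i
    rw [← hcoordred M i]
    exact hfix i
  have tangent_of : ∀ Z W : Fin n → Zq p k,
      (∀ G ∈ iterKer (Zq p k) ΦR, eval Z G = 0) →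
      (∀ i, Z i - X i = (p : Zq p k) ^ 2 * W i) →
      ∀ g ∈ iterKer (GaloisField p k) ΦF,
        ∑ j, eval x (pderiv j g) * π (W j) = 0 := by
    intro Z W hZV hZW g hg
    rw [hp] at hg
    obtain ⟨G, hGmem, rfl⟩ :=
      (Ideal.mem_map_iff_of_surjective _ (MvPolynomial.map_surjective π hπ)).mp hg
    have hred : ∀ j, eval x (pderiv j (MvPolynomial.map π G)) = π (eval X (pderiv j G)) := by
      intro j
      rw [pderiv_map, ProofAux.map_eval' π]
    have hsum : ∑ j, eval x (pderiv j (MvPolynomial.map π G)) * π (W j)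
        = π (∑ j, eval X (pderiv j G) * W j) := by
      rw [map_sum]
      exact Finset.sum_congr rfl fun j _ => by rw [hred j, ← map_mul]
    rw [hsum, hdvd_pi]
    have ht := ProofAux.taylor2 G X (fun l => (p : Zq p k) ^ 2 * W l) ((p : Zq p k) ^ 2)
      (fun l => ⟨W l, rfl⟩)
    have hZ' : (fun l => X l + (p : Zq p k) ^ 2 * W l) = Z := funext fun l => by
      rw [← hZW l]; ring
    rw [hZ', hZV G hGmem, hX G hGmem] at ht
    have hsum2 : ∑ j, eval X (pderiv j G) * ((p : Zq p k) ^ 2 * W j)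
        = (p : Zq p k) ^ 2 * ∑ j, eval X (pderiv j G) * W j := by
      rw [Finset.mul_sum]
      exact Finset.sum_congr rfl fun j _ => by ring
    rw [hsum2] at ht
    obtain ⟨r, hr⟩ := ht
    have h2 : (p : Zq p k) ^ 2 ∣ ∑ j, eval X (pderiv j G) * W j := by
      apply hcancel 2 2
      exact ⟨-r, by linear_combination -hr⟩
    exact dvd_trans (dvd_pow_self _ two_ne_zero) h2
  choose Y hY using hX'X
  have hyT := tangent_of X' Y hX'V hY
  have hΨXV : ∀ G ∈ iterKer (Zq p k) ΦR, eval ((polySelfMap ΦR)^[p * M] X) G = 0 := by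
    intro G hG
    rw [← ProofAux.eval_substEnd_pow]
    exact hX _ (ProofAux.substEnd_pow_mem ΦR hG (p * M))
  have hdT := tangent_of ((polySelfMap ΦR)^[p * M] X) D₂ hΨXV hD₂
  have hy1 := htan (fun j => π (Y j)) hyT
  have hd1 := htan (fun j => π (D₂ j)) hdT
  have Hstep : ∀ y : Fin n → GaloisField p k,
      (∀ i, ∑ j, eval x (pderiv j ((substEnd (GaloisField p k) ΦF ^ M)
          (MvPolynomial.X i))) * y j = y i) →
      ∀ g, ∑ j, eval x (pderiv j ((substEnd (GaloisField p k) ΦF ^ M) g)) * y j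
          = ∑ l, eval x (pderiv l g) * y l := by
    intro y hy g
    have hBM : (substEnd (GaloisField p k) ΦF ^ M) g
        = aeval (fun l => (substEnd (GaloisField p k) ΦF ^ M) (MvPolynomial.X l)) g := by
      conv_lhs => rw [aeval_unique (substEnd (GaloisField p k) ΦF ^ M)]
      rfl
    rw [hBM]
    have hps : ∀ j, eval x (pderiv j (aeval
        (fun l => (substEnd (GaloisField p k) ΦF ^ M) (MvPolynomial.X l)) g))
        = ∑ l, eval x (pderiv l g) * eval x (pderiv j
            ((substEnd (GaloisField p k) ΦF ^ M) (MvPolynomial.X l))) := by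
      intro j
      rw [ProofAux.pderiv_aeval', map_sum]
      refine Finset.sum_congr rfl fun l _ => ?_
      rw [eval_mul, ProofAux.eval_aeval']
      have hxx : (fun l' => eval x ((substEnd (GaloisField p k) ΦF ^ M)
          (MvPolynomial.X l'))) = x := funext hfixF
      rw [hxx]
    simp only [hps]
    simp only [Finset.sum_mul]
    rw [Finset.sum_comm]
    refine Finset.sum_congr rfl fun l _ => ?_
    rw [← hy l, Finset.mul_sum]
    exact Finset.sum_congr rfl fun j _ => by ring
  have Hm : ∀ y : Fin n → GaloisField p k,
      (∀ i, ∑ j, eval x (pderiv j ((substEnd (GaloisField p k) ΦF ^ M)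
          (MvPolynomial.X i))) * y j = y i) →
      ∀ (m : ℕ) (i : Fin n),
        ∑ j, eval x (pderiv j ((substEnd (GaloisField p k) ΦF ^ (m * M))
          (MvPolynomial.X i))) * y j = y i := by
    intro y hy m
    induction m with
    | zero =>
        intro i
        simp only [Nat.zero_mul, pow_zero, AlgHom.one_apply]
        have hXd : ∀ j, eval x (pderiv j
            (MvPolynomial.X i : MvPolynomial (Fin n) (GaloisField p k)))
            = if i = j then 1 else 0 := by
          intro j
          rcases eq_or_ne i j with rfl | hij
          · simp
          · simp [pderiv_X_of_ne hij, hij]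
        simp only [hXd, ite_mul, one_mul, zero_mul, Finset.sum_ite_eq, Finset.mem_univ,
          if_true]
    | succ m ih =>
        intro i
        have hsplit : (substEnd (GaloisField p k) ΦF ^ ((m + 1) * M)) (MvPolynomial.X i)
            = (substEnd (GaloisField p k) ΦF ^ M)
                ((substEnd (GaloisField p k) ΦF ^ (m * M)) (MvPolynomial.X i)) := by
          rw [show (m + 1) * M = M + m * M from by ring, pow_add, AlgHom.mul_apply]
        rw [hsplit, Hstep y hy]
        exact ih i
  have HY := Hm (fun j => π (Y j)) hy1 p
  have HD := Hm (fun j => π (D₂ j)) hd1 p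
  have hmod : ∀ (W : Fin n → Zq p k) (u : Fin n → GaloisField p k),
      (∀ j, π (W j) = u j) →
      (∀ i, ∑ j, eval x (pderiv j ((substEnd (GaloisField p k) ΦF ^ (p * M))
          (MvPolynomial.X i))) * u j = u i) →
      ∀ i, π (∑ j, eval X (pderiv j ((substEnd (Zq p k) ΦR ^ (p * M))
          (MvPolynomial.X i))) * W j) = u i := by
    intro W u hWu hu i
    have hterm : ∀ j, π (eval X (pderiv j ((substEnd (Zq p k) ΦR ^ (p * M))
          (MvPolynomial.X i))) * W j)
        = eval x (pderiv j ((substEnd (GaloisField p k) ΦF ^ (p * M))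
            (MvPolynomial.X i))) * u j := by
      intro j
      rw [map_mul, hWu j, ProofAux.map_eval' π, ← pderiv_map, hmapcomm, map_X]
    rw [map_sum]
    simp only [hterm]
    exact hu i
  have key : ∀ Z W : Fin n → Zq p k, (∀ i, Z i - X i = (p : Zq p k) ^ 2 * W i) →
      ∀ i, ∃ r : Zq p k, (polySelfMap ΦR)^[p * M] Z i
        = X i + (p : Zq p k) ^ 2 * D₂ i
          + (p : Zq p k) ^ 2 * (∑ j, eval X (pderiv j ((substEnd (Zq p k) ΦR ^ (p * M))
              (MvPolynomial.X i))) * W j)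
          + (p : Zq p k) ^ 4 * r := by
    intro Z W hZW i
    obtain ⟨r, hr⟩ := ProofAux.taylor2
      ((substEnd (Zq p k) ΦR ^ (p * M)) (MvPolynomial.X i)) X
      (fun l => (p : Zq p k) ^ 2 * W l) ((p : Zq p k) ^ 2) (fun l => ⟨W l, rfl⟩)
    refine ⟨r, ?_⟩
    have hZ' : (fun l => X l + (p : Zq p k) ^ 2 * W l) = Z := funext fun l => by
      rw [← hZW l]; ring
    rw [hZ'] at hr
    have e1 : eval Z ((substEnd (Zq p k) ΦR ^ (p * M)) (MvPolynomial.X i))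
        = (polySelfMap ΦR)^[p * M] Z i := (ProofAux.iter_coord ΦR (p * M) Z i).symm
    have e2 : eval X ((substEnd (Zq p k) ΦR ^ (p * M)) (MvPolynomial.X i))
        = X i + (p : Zq p k) ^ 2 * D₂ i := by
      rw [← ProofAux.iter_coord]
      linear_combination hD₂ i
    have e3 : ∑ j, eval X (pderiv j ((substEnd (Zq p k) ΦR ^ (p * M))
          (MvPolynomial.X i))) * ((p : Zq p k) ^ 2 * W j)
        = (p : Zq p k) ^ 2 * ∑ j, eval X (pderiv j ((substEnd (Zq p k) ΦR ^ (p * M))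
            (MvPolynomial.X i))) * W j := by
      rw [Finset.mul_sum]
      exact Finset.sum_congr rfl fun j _ => by ring
    rw [e1, e2, e3] at hr
    linear_combination hr
  constructor
  · intro i
    obtain ⟨r, hr⟩ := key X' Y hY i
    have hπS := hmod Y (fun j => π (Y j)) (fun j => rfl) HY i
    have hdvd : (p : Zq p k) ∣ (∑ j, eval X (pderiv j ((substEnd (Zq p k) ΦR ^ (p * M))
        (MvPolynomial.X i))) * Y j) - Y i := by
      rw [← hdvd_pi, map_sub, hπS, sub_self]
    obtain ⟨c, hc⟩ := hdvd
    refine ⟨c + (p : Zq p k) * r, ?_⟩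
    linear_combination hr + (p : Zq p k) ^ 2 * hc - hY i
  · have hiter2 : (polySelfMap ΦR)^[p ^ 2 * M] X' = ((polySelfMap ΦR)^[p * M])^[p] X' := by
      rw [← Function.iterate_mul]
      congr 1
      ring
    have main2 : ∀ jj : ℕ, ∀ i, ∃ e : Zq p k,
        ((polySelfMap ΦR)^[p * M])^[jj] X' i
          = X' i + (jj : Zq p k) * ((p : Zq p k) ^ 2 * D₂ i) + (p : Zq p k) ^ 3 * e := by
      intro jj
      induction jj with
      | zero => intro i; exact ⟨0, by simp⟩
      | succ jj ih =>
          choose e he using ih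
          intro i
          set Z : Fin n → Zq p k := ((polySelfMap ΦR)^[p * M])^[jj] X' with hZ
          have hZW : ∀ i', Z i' - X i'
              = (p : Zq p k) ^ 2 * (Y i' + (jj : Zq p k) * D₂ i' + (p : Zq p k) * e i') := by
            intro i'
            linear_combination he i' + hY i'
          obtain ⟨r, hr⟩ := key Z
            (fun i' => Y i' + (jj : Zq p k) * D₂ i' + (p : Zq p k) * e i') hZW i
          have hu : ∀ i', ∑ j, eval x (pderiv j ((substEnd (GaloisField p k) ΦF ^ (p * M))
                (MvPolynomial.X i'))) * (π (Y j) + (jj : GaloisField p k) * π (D₂ j))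
              = π (Y i') + (jj : GaloisField p k) * π (D₂ i') := by
            intro i'
            have hsplit2 : ∑ j, eval x (pderiv j ((substEnd (GaloisField p k) ΦF ^ (p * M))
                  (MvPolynomial.X i'))) * (π (Y j) + (jj : GaloisField p k) * π (D₂ j))
                = (∑ j, eval x (pderiv j ((substEnd (GaloisField p k) ΦF ^ (p * M))
                    (MvPolynomial.X i'))) * π (Y j))
                  + (jj : GaloisField p k) * ∑ j, eval x (pderiv j
                    ((substEnd (GaloisField p k) ΦF ^ (p * M))
                      (MvPolynomial.X i'))) * π (D₂ j) := by
              rw [Finset.mul_sum, ← Finset.sum_add_distrib]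
              exact Finset.sum_congr rfl fun j _ => by ring
            rw [hsplit2, HY i', HD i']
          have hπW : ∀ j, π (Y j + (jj : Zq p k) * D₂ j + (p : Zq p k) * e j)
              = π (Y j) + (jj : GaloisField p k) * π (D₂ j) := by
            intro j
            simp [map_add, map_mul, map_natCast, CharP.cast_eq_zero]
          have hπS := hmod _ _ hπW hu i
          have hdvd : (p : Zq p k) ∣ (∑ j, eval X (pderiv j ((substEnd (Zq p k) ΦR ^ (p * M))
                (MvPolynomial.X i))) * (Y j + (jj : Zq p k) * D₂ j + (p : Zq p k) * e j))
              - (Y i + (jj : Zq p k) * D₂ i) := by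
            rw [← hdvd_pi, map_sub, hπS, map_add, map_mul, map_natCast]
            ring
          obtain ⟨c, hc⟩ := hdvd
          refine ⟨c + (p : Zq p k) * r, ?_⟩
          rw [Function.iterate_succ_apply', ← hZ]
          push_cast
          linear_combination hr + (p : Zq p k) ^ 2 * hc - hY i
    intro i
    obtain ⟨e, he⟩ := main2 p i
    refine ⟨D₂ i + e, ?_⟩
    rw [hiter2]
    linear_combination he

end
end
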